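/- Let r > 0 and let F, G : ℂ → ℂ be holomorphic on the open ball B(0, r), and suppose both are real on the real segment: Im F(x) = 0 and Im G(x) = 0 for every real x with |x| < r. Assume G'(0) ≠ 0 (under the hypotheses, F'(0) and G'(0) are real numbers). Then the ratio Im F(z)/Im G(z) converges to F'(0)/G'(0) as z → 0 with z in the open upper half-plane H = {z ∈ ℂ : Im z > 0}; that is, the limit along the filter of neighborhoods of 0 restricted to H exists and equals F'(0)/G'(0). -/

import Mathlib

/-!
Compare `z` with its real part: strict differentiability of `f` at `0` gives
`f z - f (re z) = (z - re z) f'(0) + o(|Im z|)`, and since `f (re z)` is real and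
`z - re z = i Im z`, taking imaginary parts yields `Im f(z) = Im z · Re f'(0) + o(Im z)`.
So `Im F / Im G = (Re F'(0) + o(1)) / (Re G'(0) + o(1))`, and `Re G'(0) = G'(0) ≠ 0`
because a function real on the real axis has a real derivative there.
-/

open Filter Topology Asymptotics

namespace Complex

variable {f : ℂ → ℂ} {c : ℂ} {a : ℝ}

theorem isLittleO_im_sub_im_mul_re_of_hasStrictDerivAt (hf : HasStrictDerivAt f c a)
    (hreal : ∀ᶠ x : ℝ in 𝓝 a, (f x).im = 0) :
    (fun z => (f z).im - z.im * c.re) =o[𝓝 (a : ℂ)] fun z => z.im := by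
  have hre : Tendsto (fun z : ℂ => z.re) (𝓝 (a : ℂ)) (𝓝 a) := by
    simpa using continuous_re.tendsto (a : ℂ)
  have hpair : Tendsto (fun z : ℂ => (z, (z.re : ℂ))) (𝓝 (a : ℂ)) (𝓝 ((a : ℂ), (a : ℂ))) :=
    tendsto_id.prodMk_nhds (continuous_ofReal.tendsto a |>.comp hre)
  have hsmall := hf.hasStrictFDerivAt.isLittleO.comp_tendsto hpair
  have him : (fun z => (f z).im - z.im * c.re) =ᶠ[𝓝 (a : ℂ)]
      fun z => (f z - f z.re - (z - z.re) * c).im := by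
    filter_upwards [hre.eventually hreal] with z hz
    simp [hz, mul_comm]
  have hnorm : (fun z : ℂ => z - z.re) =O[𝓝 (a : ℂ)] fun z => z.im :=
    isBigO_of_le _ fun z => by
      rw [show z - z.re = z.im * I by simp [Complex.ext_iff]]; simp
  exact ((isBigO_of_le _ fun z => abs_im_le_norm _).trans_isLittleO
    (hsmall.trans_isBigO hnorm)).congr' him.symm EventuallyEq.rfl

theorem tendsto_im_div_im_of_hasStrictDerivAt (hf : HasStrictDerivAt f c a)
    (hreal : ∀ᶠ x : ℝ in 𝓝 a, (f x).im = 0) :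
    Tendsto (fun z => (f z).im / z.im) (𝓝[{z | z.im ≠ 0}] (a : ℂ)) (𝓝 c.re) := by
  have h := (isLittleO_im_sub_im_mul_re_of_hasStrictDerivAt hf hreal).tendsto_div_nhds_zero
    |>.add_const c.re
  rw [zero_add] at h
  refine (h.mono_left nhdsWithin_le_nhds).congr' ?_
  filter_upwards [self_mem_nhdsWithin] with z (hz : z.im ≠ 0)
  field_simp
  ring

theorem im_eq_zero_of_hasDerivAt_of_eventually_real (hf : HasDerivAt f c a)
    (hreal : ∀ᶠ x : ℝ in 𝓝 a, (f x).im = 0) : c.im = 0 :=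
  (imCLM.hasFDerivAt.comp_hasDerivAt a hf.comp_ofReal).unique
    ((hasDerivAt_const a 0).congr_of_eventuallyEq hreal)

end Complex

open Complex in
/-- Boundary limit of the ratio of two harmonic functions vanishing on a common boundary
segment: if `F, G` are holomorphic on `B(0,r)` and real on the real segment `(-r, r)`,
and `G'(0) ≠ 0`, then `Im F(z) / Im G(z) → F'(0)/G'(0)` as `z → 0` in the upper
half-plane (the derivatives being real numbers). -/
theorem tendsto_ratio_im_of_real_on_segment
    (r : ℝ) (hr : 0 < r) (F G : ℂ → ℂ)
    (hF : DifferentiableOn ℂ F (Metric.ball 0 r))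
    (hG : DifferentiableOn ℂ G (Metric.ball 0 r))
    (hFreal : ∀ x : ℝ, |x| < r → (F x).im = 0)
    (hGreal : ∀ x : ℝ, |x| < r → (G x).im = 0)
    (hG0 : deriv G 0 ≠ 0) :
    Tendsto (fun z : ℂ => (F z).im / (G z).im)
      (nhdsWithin (0 : ℂ) {z : ℂ | 0 < z.im})
      (nhds ((deriv F 0).re / (deriv G 0).re)) := by
  have hsegment : ∀ᶠ x : ℝ in 𝓝 0, |x| < r := by
    filter_upwards [Metric.ball_mem_nhds (0 : ℝ) hr] with x hx
    simpa using hx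
  have hstrict {H : ℂ → ℂ} (hH : DifferentiableOn ℂ H (Metric.ball 0 r)) :
      HasStrictDerivAt H (deriv H 0) ((0 : ℝ) : ℂ) := by
    simpa using (hH.analyticAt (Metric.ball_mem_nhds 0 hr)).hasStrictDerivAt
  have hFlim := tendsto_im_div_im_of_hasStrictDerivAt (hstrict hF) (hsegment.mono hFreal)
  have hGlim := tendsto_im_div_im_of_hasStrictDerivAt (hstrict hG) (hsegment.mono hGreal)
  have hGre : (deriv G 0).re ≠ 0 := fun h => hG0 <| Complex.ext h <|
    im_eq_zero_of_hasDerivAt_of_eventually_real (hstrict hG).hasDerivAt (hsegment.mono hGreal)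
  rw [ofReal_zero] at hFlim hGlim
  refine ((hFlim.div hGlim hGre).mono_left (nhdsWithin_mono _ fun z hz => ne_of_gt hz)).congr' ?_
  filter_upwards [self_mem_nhdsWithin] with z (hz : 0 < z.im)
  exact div_div_div_cancel_right₀ hz.ne' _ _
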